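/- arXiv:0906.4609 — 3 statements merged into one kernel-verified Lean document; each statement's English description precedes it below -/
import Mathlib

section
/- Every critical independent set of a finite simple graph G is a local maximum independent set of G. -/
namespace KEPaper

open SimpleGraph

variable {V : Type*}

/-- `nbhd G S` is the set of vertices having a neighbor in `S`. -/
def nbhd (G : SimpleGraph V) (S : Set V) : Set V := {v | ∃ w ∈ S, G.Adj v w}

/-- `S` is an independent set of `G`: no two vertices of `S` are adjacent. -/
def IsIndep (G : SimpleGraph V) (S : Set V) : Prop :=
  S.Pairwise fun u v => ¬ G.Adj u v

/-- The independence number `α(G)`: maximum cardinality of an independent set. -/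
noncomputable def indepNum (G : SimpleGraph V) : ℕ :=
  sSup {n | ∃ S : Set V, IsIndep G S ∧ S.ncard = n}

/-- The matching number `μ(G)`: maximum cardinality of a matching. -/
noncomputable def matchNum (G : SimpleGraph V) : ℕ :=
  sSup {n | ∃ M : Subgraph G, M.IsMatching ∧ M.edgeSet.ncard = n}

/-- `S` is a maximum independent set of `G`. -/
def IsMaxIndep (G : SimpleGraph V) (S : Set V) : Prop :=
  IsIndep G S ∧ S.ncard = indepNum G

/-- The critical difference `d(G) = max {|S| - |N(S)| : S independent}`. -/
noncomputable def critDiff (G : SimpleGraph V) : ℤ :=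
  sSup {d : ℤ | ∃ S : Set V, IsIndep G S ∧ d = (S.ncard : ℤ) - ((nbhd G S).ncard : ℤ)}

/-- `S` is a critical independent set: independent with `|S| - |N(S)| = d(G)`. -/
def IsCritIndep (G : SimpleGraph V) (S : Set V) : Prop :=
  IsIndep G S ∧ (S.ncard : ℤ) - ((nbhd G S).ncard : ℤ) = critDiff G

/-- `core G` is the intersection of all maximum independent sets of `G`. -/
def core (G : SimpleGraph V) : Set V := ⋂ S ∈ {S : Set V | IsMaxIndep G S}, S

/-- `G` is a König–Egerváry graph: `|V(G)| = α(G) + μ(G)`. -/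
def KoenigEgervary (G : SimpleGraph V) : Prop :=
  Nat.card V = indepNum G + matchNum G

/-- `A` is a local maximum independent set of `G`: it is a maximum independent
set of the subgraph of `G` induced by `N[A] = A ∪ N(A)`. -/
def IsLocalMaxIndep (G : SimpleGraph V) (A : Set V) : Prop :=
  IsMaxIndep (G.induce (A ∪ nbhd G A)) {x : ↥(A ∪ nbhd G A) | ↑x ∈ A}

/-!
Criticality makes `A` satisfy Hall's condition towards its neighbourhood: for `T ⊆ N(A)` the
independent set `A \ N(T)` has neighbourhood inside `N(A) \ T`, so comparing its surplus with the
maximal one `|A| - |N(A)|` gives `|T| ≤ |A ∩ N(T)|`. Now let `B ⊆ N[A]` be independent and put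
`T = B \ A ⊆ N(A)`. Independence of `B` puts `B ∩ A` inside `A \ N(T)`, hence
`|B| = |B ∩ A| + |T| ≤ |A \ N(T)| + |A ∩ N(T)| = |A|`.
-/

lemma isMaxIndep_of_forall_ncard_le {G : SimpleGraph V} {S : Set V} (hS : IsIndep G S)
    (hmax : ∀ T, IsIndep G T → T.ncard ≤ S.ncard) : IsMaxIndep G S := by
  refine ⟨hS, Eq.symm <| IsGreatest.csSup_eq ?_⟩
  refine ⟨⟨S, hS, rfl⟩, ?_⟩
  rintro n ⟨T, hT, rfl⟩
  exact hmax T hT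

lemma IsIndep.image_val {G : SimpleGraph V} {U : Set V} {S : Set U}
    (hS : IsIndep (G.induce U) S) : IsIndep G (Subtype.val '' S) := by
  rintro _ ⟨x, hx, rfl⟩ _ ⟨y, hy, rfl⟩ hne hadj
  exact hS hx hy (fun e => hne (congrArg Subtype.val e)) hadj

lemma IsIndep.preimage_val {G : SimpleGraph V} {S : Set V} (hS : IsIndep G S) (U : Set V) :
    IsIndep (G.induce U) (Subtype.val ⁻¹' S) :=
  fun _ hx _ hy hne hadj => hS hx hy (Subtype.coe_injective.ne hne) hadj

lemma le_critDiff [Finite V] {G : SimpleGraph V} {S : Set V} (hS : IsIndep G S) :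
    (S.ncard : ℤ) - (nbhd G S).ncard ≤ critDiff G := by
  unfold critDiff
  refine le_csSup ?_ ⟨S, hS, rfl⟩
  refine ⟨Nat.card V, ?_⟩
  rintro d ⟨T, -, rfl⟩
  have hT : T.ncard ≤ Nat.card V := Set.ncard_le_card T
  omega

section Critical

variable [Finite V] {G : SimpleGraph V} {A : Set V}

lemma IsCritIndep.ncard_le_ncard_inter_nbhd (hA : IsCritIndep G A) {T : Set V}
    (hT : T ⊆ nbhd G A) : T.ncard ≤ (A ∩ nbhd G T).ncard := by
  have hsub : nbhd G (A \ nbhd G T) ⊆ nbhd G A \ T := by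
    rintro v ⟨a, ha, hadj⟩
    exact ⟨⟨a, ha.1, hadj⟩, fun hvT => ha.2 ⟨v, hvT, hadj.symm⟩⟩
  have hsurplus := le_critDiff (hA.1.mono (Set.sdiff_subset (t := nbhd G T)))
  rw [← hA.2] at hsurplus
  have hsplitA := Set.ncard_inter_add_ncard_sdiff_eq_ncard A (nbhd G T)
  have hsplitN := Set.ncard_sdiff_add_ncard_of_subset hT
  have hle := Set.ncard_le_ncard hsub (Set.toFinite _)
  omega

lemma IsCritIndep.ncard_le_of_subset_closedNbhd (hA : IsCritIndep G A) {B : Set V}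
    (hB : IsIndep G B) (hBA : B ⊆ A ∪ nbhd G A) : B.ncard ≤ A.ncard := by
  have hT : B \ A ⊆ nbhd G A := fun b hb => (hBA hb.1).resolve_left hb.2
  have hinter : B ∩ A ⊆ A \ nbhd G (B \ A) := by
    rintro b ⟨hbB, hbA⟩
    refine ⟨hbA, ?_⟩
    rintro ⟨t, ⟨htB, htA⟩, hadj⟩
    exact hB hbB htB (fun e => htA (e ▸ hbA)) hadj
  calc B.ncard = (B ∩ A).ncard + (B \ A).ncard :=
        (Set.ncard_inter_add_ncard_sdiff_eq_ncard B A).symm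
    _ ≤ (A \ nbhd G (B \ A)).ncard + (A ∩ nbhd G (B \ A)).ncard :=
      add_le_add (Set.ncard_le_ncard hinter) (hA.ncard_le_ncard_inter_nbhd hT)
    _ = A.ncard := by rw [add_comm, Set.ncard_inter_add_ncard_sdiff_eq_ncard]

end Critical

/-- Every critical independent set of a finite simple graph `G` is a local
maximum independent set of `G`. -/
theorem critIndep_isLocalMaxIndep [Finite V] (G : SimpleGraph V) (A : Set V)
    (hA : IsCritIndep G A) : IsLocalMaxIndep G A := by
  have hAU : (Subtype.val ⁻¹' A : Set ↥(A ∪ nbhd G A)).ncard = A.ncard :=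
    Set.ncard_preimage_of_injective_subset_range Subtype.coe_injective
      (Subtype.range_coe ▸ Set.subset_union_left)
  refine isMaxIndep_of_forall_ncard_le (hA.1.preimage_val _) fun S hS => ?_
  change S.ncard ≤ (Subtype.val ⁻¹' A).ncard
  rw [hAU, ← Set.ncard_image_of_injective S Subtype.coe_injective]
  exact hA.ncard_le_of_subset_closedNbhd hS.image_val (Subtype.coe_image_subset _ S)

end KEPaper
end

section
/- Every critical independent set of a finite simple graph G is contained in some maximum independent set of G. -/
/-!
Let `A` be critical and `S` a maximum independent set. Then `S' = A ∪ (S \ N(A))` is independent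
and contains `A`, and `|S'| = |A \ S| + |S \ N(A)|`. Since `S` is independent, `S ∩ N(A)` and
`N(A ∩ S)` are disjoint subsets of `N(A)`, so criticality of `A`, compared with the independent set
`A ∩ S`, gives `|S ∩ N(A)| ≤ |N(A)| - |N(A ∩ S)| ≤ |A| - |A ∩ S| = |A \ S|`. Hence `|S'| ≥ |S|`.
-/

namespace KEPaper

open SimpleGraph

variable {V : Type*}

section

variable {G : SimpleGraph V} {A S T : Set V}

theorem nbhd_mono (h : S ⊆ T) : nbhd G S ⊆ nbhd G T :=
  fun _ ⟨w, hw, hadj⟩ => ⟨w, h hw, hadj⟩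

theorem IsIndep.mono (hS : IsIndep G S) (h : T ⊆ S) : IsIndep G T :=
  Set.Pairwise.mono h hS

theorem IsIndep.disjoint_nbhd_of_subset (hS : IsIndep G S) (hT : T ⊆ S) :
    Disjoint S (nbhd G T) :=
  Set.disjoint_left.mpr fun _ hv ⟨_, hw, hadj⟩ => hS hv (hT hw) hadj.ne hadj

theorem IsIndep.union_diff_nbhd (hA : IsIndep G A) (hS : IsIndep G S) :
    IsIndep G (A ∪ (S \ nbhd G A)) := by
  rintro u (huA | ⟨huS, huN⟩) v (hvA | ⟨hvS, hvN⟩) hne hadj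
  · exact hA huA hvA hne hadj
  · exact hvN ⟨u, huA, hadj.symm⟩
  · exact huN ⟨v, hvA, hadj⟩
  · exact hS huS hvS hne hadj

variable [Finite V]

theorem bddAbove_indep_ncard (G : SimpleGraph V) :
    BddAbove {n | ∃ S : Set V, IsIndep G S ∧ S.ncard = n} :=
  ⟨Nat.card V, by rintro n ⟨S, -, rfl⟩; exact S.ncard_le_card⟩

theorem IsIndep.ncard_le_indepNum (hS : IsIndep G S) : S.ncard ≤ indepNum G :=
  le_csSup (bddAbove_indep_ncard G) ⟨S, hS, rfl⟩

theorem exists_isMaxIndep (G : SimpleGraph V) : ∃ S : Set V, IsMaxIndep G S := by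
  have hne : {n | ∃ S : Set V, IsIndep G S ∧ S.ncard = n}.Nonempty :=
    ⟨0, ∅, Set.pairwise_empty _, Set.ncard_empty V⟩
  obtain ⟨S, hS, hcard⟩ : ∃ S : Set V, IsIndep G S ∧ S.ncard = indepNum G :=
    Nat.sSup_mem hne (bddAbove_indep_ncard G)
  exact ⟨S, hS, hcard⟩

theorem IsMaxIndep.of_ncard_le (hS : IsMaxIndep G S) (hT : IsIndep G T)
    (h : S.ncard ≤ T.ncard) : IsMaxIndep G T :=
  ⟨hT, le_antisymm hT.ncard_le_indepNum (hS.2 ▸ h)⟩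

theorem IsIndep.ncard_sub_ncard_nbhd_le_critDiff (hS : IsIndep G S) :
    (S.ncard : ℤ) - (nbhd G S).ncard ≤ critDiff G := by
  refine le_csSup ⟨Nat.card V, ?_⟩ ⟨S, hS, rfl⟩
  rintro d ⟨T, -, rfl⟩
  have := T.ncard_le_card
  omega

theorem IsCritIndep.ncard_inter_nbhd_le (hA : IsCritIndep G A) (hS : IsIndep G S) :
    (S ∩ nbhd G A).ncard ≤ (A \ S).ncard := by
  have hcrit := (hA.1.mono (T := A ∩ S) Set.inter_subset_left).ncard_sub_ncard_nbhd_le_critDiff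
  rw [← hA.2] at hcrit
  have hdisj : Disjoint (S ∩ nbhd G A) (nbhd G (A ∩ S)) :=
    (hS.disjoint_nbhd_of_subset Set.inter_subset_right).mono_left Set.inter_subset_left
  have hnbhd : (S ∩ nbhd G A).ncard + (nbhd G (A ∩ S)).ncard ≤ (nbhd G A).ncard := by
    rw [← Set.ncard_union_eq hdisj]
    exact Set.ncard_le_ncard
      (Set.union_subset Set.inter_subset_right (nbhd_mono Set.inter_subset_left))
  have hsplit := Set.ncard_inter_add_ncard_sdiff_eq_ncard A S
  omega

theorem IsCritIndep.ncard_le_ncard_union_diff_nbhd (hA : IsCritIndep G A) (hS : IsIndep G S) :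
    S.ncard ≤ (A ∪ (S \ nbhd G A)).ncard := by
  have hunion : A \ S ∪ (S \ nbhd G A) = A ∪ (S \ nbhd G A) := by
    ext v
    constructor
    · rintro (⟨hvA, -⟩ | hv)
      exacts [Or.inl hvA, Or.inr hv]
    · rintro (hvA | hv)
      · by_cases hvS : v ∈ S
        · exact Or.inr ⟨hvS, Set.disjoint_left.mp (hA.1.disjoint_nbhd_of_subset subset_rfl) hvA⟩
        · exact Or.inl ⟨hvA, hvS⟩
      · exact Or.inr hv
  calc S.ncard = (S ∩ nbhd G A).ncard + (S \ nbhd G A).ncard :=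
        (Set.ncard_inter_add_ncard_sdiff_eq_ncard S _).symm
    _ ≤ (A \ S).ncard + (S \ nbhd G A).ncard :=
        Nat.add_le_add_right (hA.ncard_inter_nbhd_le hS) _
    _ = (A ∪ (S \ nbhd G A)).ncard := by
        rw [← hunion, Set.ncard_union_eq (Set.disjoint_sdiff_left.mono_right Set.sdiff_subset)]

end

/-- Every critical independent set of a finite simple graph `G` is contained in
some maximum independent set of `G`. -/
theorem critIndep_subset_maxIndep [Finite V] (G : SimpleGraph V) (A : Set V)
    (hA : IsCritIndep G A) : ∃ S : Set V, IsMaxIndep G S ∧ A ⊆ S := by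
  obtain ⟨S, hS⟩ := exists_isMaxIndep G
  exact ⟨A ∪ (S \ nbhd G A),
    hS.of_ncard_le (hA.1.union_diff_nbhd hS.1) (hA.ncard_le_ncard_union_diff_nbhd hS.1),
    Set.subset_union_left⟩

end KEPaper
end

section
/- If G is a finite König–Egerváry graph, then for every independent set S of G one has |S| − |N(S)| ≤ α(G) − μ(G). -/
/-!
Fix a maximum matching `M`, which covers `2μ` vertices. Sending each covered vertex of `S` to
its partner is injective into `N(S)`, and the covered vertices outside `S` are disjoint from `S`,
so `|S| + 2μ ≤ |V| + |N(S)|`. In a König–Egerváry graph `|V| - 2μ = α - μ`.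
-/

namespace KEPaper

open SimpleGraph

variable {V : Type*}

theorem _root_.SimpleGraph.Subgraph.IsMatching.ncard_verts_eq_two_mul [Finite V]
    {G : SimpleGraph V} {M : G.Subgraph} (hM : M.IsMatching) :
    M.verts.ncard = 2 * M.edgeSet.ncard := by
  have := Fintype.ofFinite M.edgeSet
  have hfiber : ∀ e : M.edgeSet, Nat.card (hM.toEdge ⁻¹' {e}) = 2 := by
    rintro ⟨e, he⟩
    induction e using Sym2.ind with
    | h u v =>
      rw [hM.toEdge_preimage_singleton he, Nat.card_coe_set_eq,
        Set.ncard_pair (by simpa using he.ne)]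
  calc M.verts.ncard = Nat.card (Σ e, hM.toEdge ⁻¹' {e}) :=
        (Nat.card_coe_set_eq _).symm.trans (Nat.card_congr (Equiv.sigmaFiberEquiv _).symm)
    _ = 2 * M.edgeSet.ncard := by
      simp only [Nat.card_sigma, hfiber, Finset.sum_const, Finset.card_univ, smul_eq_mul,
        ← Nat.card_eq_fintype_card, Nat.card_coe_set_eq, mul_comm]

section Counting

variable [Finite V] {G : SimpleGraph V}

theorem ncard_verts_inter_le_ncard_nbhd {M : G.Subgraph} (hM : M.IsMatching) (S : Set V) :
    (M.verts ∩ S).ncard ≤ (nbhd G S).ncard := by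
  classical
  let partner : V → V := fun v => if hv : v ∈ M.verts then (hM hv).choose else v
  have hpartner : ∀ v ∈ M.verts, M.Adj v (partner v) := fun v hv => by
    simpa only [partner, dif_pos hv] using (hM hv).choose_spec.1
  refine Set.ncard_le_ncard_of_injOn partner ?_ ?_
  · rintro v ⟨hvM, hvS⟩
    exact ⟨v, hvS, (M.adj_sub (hpartner v hvM)).symm⟩
  · rintro v ⟨hvM, -⟩ w ⟨hwM, -⟩ hvw
    exact hM.eq_of_adj_right (hpartner v hvM) (hvw ▸ hpartner w hwM)

theorem ncard_add_two_mul_ncard_edgeSet_le {M : G.Subgraph} (hM : M.IsMatching) (S : Set V) :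
    S.ncard + 2 * M.edgeSet.ncard ≤ Nat.card V + (nbhd G S).ncard := by
  have hsplit := Set.ncard_inter_add_ncard_sdiff_eq_ncard M.verts S
  have hdisj : S.ncard + (M.verts \ S).ncard ≤ Nat.card V := by
    rw [← Set.ncard_union_eq Set.disjoint_sdiff_right]
    exact Set.ncard_le_card _
  have hinter := ncard_verts_inter_le_ncard_nbhd hM S
  rw [← hM.ncard_verts_eq_two_mul]
  omega

variable (G)

theorem exists_isMatching_ncard_edgeSet_eq_matchNum :
    ∃ M : G.Subgraph, M.IsMatching ∧ M.edgeSet.ncard = matchNum G := by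
  refine Nat.sSup_mem (s := {n | ∃ M : G.Subgraph, M.IsMatching ∧ M.edgeSet.ncard = n})
    ⟨0, ⊥, fun v hv => hv.elim, by simp⟩ ⟨Nat.card (Sym2 V), ?_⟩
  rintro n ⟨M, -, rfl⟩
  exact Set.ncard_le_card _

theorem ncard_sub_ncard_nbhd_le (S : Set V) :
    (S.ncard : ℤ) - (nbhd G S).ncard ≤ Nat.card V - 2 * matchNum G := by
  obtain ⟨M, hM, hcard⟩ := exists_isMatching_ncard_edgeSet_eq_matchNum G
  have := ncard_add_two_mul_ncard_edgeSet_le hM S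
  rw [hcard] at this
  omega

end Counting

/-- If `G` is a finite König–Egerváry graph, then every independent set `S` of
`G` satisfies `|S| - |N(S)| ≤ α(G) - μ(G)`. -/
theorem indep_diff_le_of_KE [Finite V] (G : SimpleGraph V)
    (hG : KoenigEgervary G) :
    ∀ S : Set V, IsIndep G S →
      (S.ncard : ℤ) - ((nbhd G S).ncard : ℤ) ≤ (indepNum G : ℤ) - (matchNum G : ℤ) := by
  intro S _
  have := ncard_sub_ncard_nbhd_le G S
  rw [hG] at this
  push_cast at this
  linarith

end KEPaper
end
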